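/- Let $f : \mathbb{R}^n \to \mathbb{R}$ be continuous, weakly differentiable in each variable, and suppose that for each $k$ and each $i > k$ the function $x \mapsto \nabla^w_i f(c_1, \ldots, c_k, x, \ldots, x, \ldots, x)|_{x_i = x}$ (evaluating all coordinates after position $k$ at $x$) has finite $q$-variation on $[-M,M]$ for every $M > 0$, with a bound uniform in $(c_1, \ldots, c_k)$ ranging over compacts. Then the function $G(t,x) := \sum_{k=0}^{n-1} \mathbb{1}_{\{t_k \le t < t_{k+1}\}} \sum_{i=k+1}^n \nabla^w_i f(c(t_1-), \ldots, c(t_k-), x, \ldots, x)|_{x_i = x}$, defined on $[0,T] \times [-M,M]$ for a fixed path $c$, has finite joint left $(p,q)$-variation $LV^{p,q}(G) < \infty$ for every $p \ge 1$, with the same $q$. -/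

import Mathlib

open Set Finset Filter MeasureTheory
open scoped ENNReal NNReal

/-- `t` is a (monotone) partition of `[a, b]` with `n` subintervals. -/
def IsPartition {n : ℕ} (a b : ℝ) (t : Fin (n + 1) → ℝ) : Prop :=
  Monotone t ∧ t 0 = a ∧ t (Fin.last n) = b

/-- The rectangular increment `Δ f(t,s;x,y) = f t x - f t y - (f s x - f s y)`. -/
def rectInc (f : ℝ → ℝ → ℝ) (t s x y : ℝ) : ℝ :=
  f t x - f t y - (f s x - f s y)

/-- The `p`-variation sum supremum `‖g‖_{[a,b];p}^p` (as an extended nonnegative real). -/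
noncomputable def pVar (p a b : ℝ) (g : ℝ → ℝ) : ℝ≥0∞ :=
  ⨆ (n : ℕ) (x : Fin (n + 1) → ℝ) (_ : IsPartition a b x),
    ∑ i : Fin n, (ENNReal.ofReal |g (x i.succ) - g (x i.castSucc)|) ^ p

/-- The joint left `(r,s)`-variation
`LV^{r,s}(f) = sup_π [ ∑_j ( ∑_i |Δ_iΔ_j f(t_i, x_j)|^r )^{s/r} ]^{1/s}`
over grid partitions of `[t₀,t₁] × [x₀,x₁]` (inner sum over the time index). -/
noncomputable def LV (r s t₀ t₁ x₀ x₁ : ℝ) (f : ℝ → ℝ → ℝ) : ℝ≥0∞ :=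
  ⨆ (n : ℕ) (m : ℕ) (t : Fin (n + 1) → ℝ) (x : Fin (m + 1) → ℝ)
    (_ : IsPartition t₀ t₁ t) (_ : IsPartition x₀ x₁ x),
    (∑ j : Fin m, (∑ i : Fin n,
      (ENNReal.ofReal
        |rectInc f (t i.succ) (t i.castSucc) (x j.succ) (x j.castSucc)|) ^ r) ^ (s / r)) ^ (1 / s)

/-- The joint right `(p,q)`-variation
`RV^{p,q}(f) = sup_π [ ∑_i ( ∑_j |Δ_iΔ_j f(t_i, x_j)|^p )^{q/p} ]^{1/q}`
over grid partitions of `[t₀,t₁] × [x₀,x₁]` (inner sum over the space index). -/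
noncomputable def RV (p q t₀ t₁ x₀ x₁ : ℝ) (f : ℝ → ℝ → ℝ) : ℝ≥0∞ :=
  ⨆ (n : ℕ) (m : ℕ) (t : Fin (n + 1) → ℝ) (x : Fin (m + 1) → ℝ)
    (_ : IsPartition t₀ t₁ t) (_ : IsPartition x₀ x₁ x),
    (∑ i : Fin n, (∑ j : Fin m,
      (ENNReal.ofReal
        |rectInc f (t i.succ) (t i.castSucc) (x j.succ) (x j.castSucc)|) ^ p) ^ (q / p)) ^ (1 / q)

/-!
The function `G` is a finite sum `∑ₖ χₖ(t) gₖ(x)` of products of an interval indicator in time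
and a function of space, so each rectangular increment of `G` is `∑ₖ Δχₖ · Δgₖ`. Along any time
partition an interval indicator has total variation at most `2`, and for `p ≥ 1` the `ℓᵖ` norm
of a row is at most its `ℓ¹` norm; Minkowski's inequality in `ℓ^q` over the space index then gives
`LV^{p,q}(G) ≤ ∑ₖ 2 ‖gₖ‖_{q-var}`. Each `gₖ` is a finite sum of functions of finite `q`-variation,
again by Minkowski.
-/

namespace ENNReal

theorem sum_rpow_le_rpow_sum {ι : Type*} (s : Finset ι) (a : ι → ℝ≥0∞) {p : ℝ} (hp : 1 ≤ p) :
    ∑ i ∈ s, a i ^ p ≤ (∑ i ∈ s, a i) ^ p := by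
  classical
  induction s using Finset.induction with
  | empty => simp
  | insert b s hb ih =>
    rw [sum_insert hb, sum_insert hb]
    exact (add_le_add le_rfl ih).trans (add_rpow_le_rpow_add _ _ hp)

theorem Lp_sum_le {ι κ : Type*} (s : Finset ι) (t : Finset κ) (f : ι → κ → ℝ≥0∞) {p : ℝ}
    (hp : 1 ≤ p) :
    (∑ j ∈ t, (∑ k ∈ s, f k j) ^ p) ^ (1 / p) ≤ ∑ k ∈ s, (∑ j ∈ t, f k j ^ p) ^ (1 / p) := by
  classical
  have hp0 : 0 < p := zero_lt_one.trans_le hp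
  induction s using Finset.induction with
  | empty => simp [zero_rpow_of_pos hp0, hp0]
  | insert b s hb ih =>
    simp only [sum_insert hb]
    exact (Lp_add_le t _ _ hp).trans (add_le_add le_rfl ih)

theorem Lp_const_mul {κ : Type*} (t : Finset κ) (c : ℝ≥0∞) (a : κ → ℝ≥0∞) {p : ℝ} (hp : 0 < p) :
    (∑ j ∈ t, (c * a j) ^ p) ^ (1 / p) = c * (∑ j ∈ t, a j ^ p) ^ (1 / p) := by
  simp only [mul_rpow_of_nonneg _ _ hp.le, ← mul_sum]
  rw [mul_rpow_of_nonneg _ _ (by positivity), ← rpow_mul, mul_one_div_cancel hp.ne', rpow_one]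

theorem sum_rpow_rpow_div_le {ι : Type*} (s : Finset ι) (a : ι → ℝ≥0∞) {p q : ℝ}
    (hp : 1 ≤ p) (hq : 0 ≤ q) :
    (∑ i ∈ s, a i ^ p) ^ (q / p) ≤ (∑ i ∈ s, a i) ^ q := by
  calc (∑ i ∈ s, a i ^ p) ^ (q / p) ≤ ((∑ i ∈ s, a i) ^ p) ^ (q / p) :=
        rpow_le_rpow (sum_rpow_le_rpow_sum s a hp) (by positivity)
    _ = (∑ i ∈ s, a i) ^ q := by
        rw [← rpow_mul, mul_div_cancel₀ _ (zero_lt_one.trans_le hp).ne']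

end ENNReal

theorem Fin.sum_succ_sub_castSucc {M : Type*} [AddCommGroup M] {N : ℕ} (u : Fin (N + 1) → M) :
    ∑ i : Fin N, (u i.succ - u i.castSucc) = u (Fin.last N) - u 0 := by
  induction N with
  | zero => simp
  | succ N ih =>
    rw [Fin.sum_univ_castSucc]
    simp only [Fin.succ_castSucc]
    rw [ih (fun i => u i.castSucc), Fin.succ_last]
    simp

theorem Monotone.sum_abs_sub_comp {N : ℕ} {t : Fin (N + 1) → ℝ} (ht : Monotone t) {φ : ℝ → ℝ}
    (hφ : Monotone φ) :
    ∑ i : Fin N, |φ (t i.succ) - φ (t i.castSucc)| = φ (t (Fin.last N)) - φ (t 0) := by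
  calc _ = ∑ i : Fin N, ((φ ∘ t) i.succ - (φ ∘ t) i.castSucc) :=
        sum_congr rfl fun i _ => abs_of_nonneg (sub_nonneg.2 (hφ (ht i.castSucc_le_succ)))
    _ = _ := Fin.sum_succ_sub_castSucc _

theorem monotone_indicator_Ici_one (a : ℝ) : Monotone ((Ici a).indicator (1 : ℝ → ℝ)) := by
  intro x y hxy
  by_cases hx : a ≤ x
  · simp [hx, hx.trans hxy]
  · exact (indicator_of_notMem hx _).trans_le (indicator_nonneg (fun _ _ => zero_le_one) _)

theorem sum_abs_sub_indicator_Ico_le {N : ℕ} {t : Fin (N + 1) → ℝ} (ht : Monotone t) (a b : ℝ) :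
    ∑ i : Fin N, |(Ico a b).indicator 1 (t i.succ) - (Ico a b).indicator (1 : ℝ → ℝ) (t i.castSucc)|
      ≤ 2 := by
  rcases lt_or_ge b a with hba | hab
  · simp [Ico_eq_empty_of_le hba.le]
  set φ : ℝ → ℝ → ℝ := fun c => (Ici c).indicator 1
  have hφ : ∀ c s, 0 ≤ φ c s ∧ φ c s ≤ 1 := fun c s => by
    by_cases hs : s ∈ Ici c <;> simp [φ, hs]
  have hvar : ∀ c, ∑ i : Fin N, |φ c (t i.succ) - φ c (t i.castSucc)| ≤ 1 := fun c => by
    rw [ht.sum_abs_sub_comp (monotone_indicator_Ici_one c)]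
    linarith [hφ c (t (Fin.last N)), hφ c (t 0)]
  rw [← Ici_sdiff_Ici, indicator_sdiff (Set.Ici_subset_Ici.2 hab)]
  calc _ ≤ ∑ i : Fin N, (|φ a (t i.succ) - φ a (t i.castSucc)|
          + |φ b (t i.succ) - φ b (t i.castSucc)|) := by
        refine sum_le_sum fun i _ => ?_
        simp only [Pi.sub_apply]
        rw [sub_sub_sub_comm]
        exact abs_sub _ _
    _ ≤ 2 := by
        rw [sum_add_distrib]
        linarith [hvar a, hvar b]

theorem sum_le_pVar {m : ℕ} {x : Fin (m + 1) → ℝ} {a b : ℝ} (hx : IsPartition a b x) (q : ℝ)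
    (g : ℝ → ℝ) :
    ∑ j : Fin m, (ENNReal.ofReal |g (x j.succ) - g (x j.castSucc)|) ^ q ≤ pVar q a b g :=
  le_iSup_of_le m (le_iSup_of_le x (le_iSup_of_le hx le_rfl))

theorem pVar_mono {q a b a' b' : ℝ} (ha : a' ≤ a) (hb : b ≤ b') (g : ℝ → ℝ) :
    pVar q a b g ≤ pVar q a' b' g := by
  refine iSup_le fun m => iSup_le fun x => iSup_le fun ⟨hmono, hx0, hxl⟩ => ?_
  -- pad the partition with `a'` in front and `b'` at the end
  set y : Fin (m + 3) → ℝ := Fin.cons a' (Fin.snoc x b')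
  have hy : IsPartition a' b' y := by
    refine ⟨Monotone.vecCons ?_ ?_, rfl, ?_⟩
    · rw [← Fin.insertNth_last']
      exact Fin.insertNth_last_monotone hmono b' (hxl ▸ hb)
    · simpa [Matrix.vecHead, hx0] using ha
    · exact (Fin.cons_succ _ _ (Fin.last (m + 1))).trans (Fin.snoc_last _ _)
  refine le_trans ?_ (sum_le_pVar hy q g)
  rw [Fin.sum_univ_succ, Fin.sum_univ_castSucc]
  refine le_add_left (le_add_right (le_of_eq (sum_congr rfl fun j _ => ?_)))
  simp only [y, ← Fin.succ_castSucc, Fin.cons_succ]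
  rw [Fin.succ_castSucc, Fin.snoc_castSucc, Fin.snoc_castSucc]

theorem pVar_one_indicator_Ico_le (a b t₀ t₁ : ℝ) : pVar 1 t₀ t₁ ((Ico a b).indicator 1) ≤ 2 := by
  refine iSup_le fun N => iSup_le fun t => iSup_le fun ht => ?_
  simp only [ENNReal.rpow_one]
  rw [← ENNReal.ofReal_sum_of_nonneg fun _ _ => abs_nonneg _, ← ENNReal.ofReal_ofNat 2]
  exact ENNReal.ofReal_le_ofReal (sum_abs_sub_indicator_Ico_le ht.1 a b)

theorem pVar_sum_rpow_le {ι : Type*} (s : Finset ι) (F : ι → ℝ → ℝ) {q : ℝ} (hq : 1 ≤ q)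
    (a b : ℝ) :
    pVar q a b (fun x => ∑ i ∈ s, F i x) ^ (1 / q) ≤ ∑ i ∈ s, pVar q a b (F i) ^ (1 / q) := by
  have hq0 : 0 < q := zero_lt_one.trans_le hq
  rw [one_div, ENNReal.rpow_inv_le_iff hq0]
  refine iSup_le fun m => iSup_le fun x => iSup_le fun hx => ?_
  rw [← ENNReal.rpow_inv_le_iff hq0, ← one_div]
  calc (∑ j : Fin m, (ENNReal.ofReal
          |∑ i ∈ s, F i (x j.succ) - ∑ i ∈ s, F i (x j.castSucc)|) ^ q) ^ (1 / q)
      ≤ (∑ j : Fin m, (∑ i ∈ s, ‖F i (x j.succ) - F i (x j.castSucc)‖ₑ) ^ q) ^ (1 / q) := by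
        gcongr with j
        rw [← sum_sub_distrib, ← Real.enorm_eq_ofReal_abs]
        exact enorm_sum_le _ _
    _ ≤ ∑ i ∈ s, (∑ j : Fin m, ‖F i (x j.succ) - F i (x j.castSucc)‖ₑ ^ q) ^ (1 / q) :=
        ENNReal.Lp_sum_le _ _ _ hq
    _ ≤ ∑ i ∈ s, pVar q a b (F i) ^ (1 / q) := by
        gcongr with i
        simpa only [Real.enorm_eq_ofReal_abs] using sum_le_pVar hx q (F i)

theorem rectInc_sum_mul {ι : Type*} (s : Finset ι) (χ g : ι → ℝ → ℝ) (t t' x x' : ℝ) :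
    rectInc (fun t x => ∑ k ∈ s, χ k t * g k x) t t' x x' =
      ∑ k ∈ s, (χ k t - χ k t') * (g k x - g k x') := by
  simp only [rectInc, ← sum_sub_distrib]
  exact sum_congr rfl fun _ _ => by ring

theorem LV_sum_mul_le {ι : Type*} (s : Finset ι) (χ g : ι → ℝ → ℝ) {p q : ℝ} (hp : 1 ≤ p)
    (hq : 1 ≤ q) (t₀ t₁ x₀ x₁ : ℝ) :
    LV p q t₀ t₁ x₀ x₁ (fun t x => ∑ k ∈ s, χ k t * g k x) ≤
      ∑ k ∈ s, pVar 1 t₀ t₁ (χ k) * pVar q x₀ x₁ (g k) ^ (1 / q) := by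
  have hq0 : 0 < q := zero_lt_one.trans_le hq
  refine iSup_le fun N => iSup_le fun m => iSup_le fun t => iSup_le fun x =>
    iSup_le fun ht => iSup_le fun hx => ?_
  set B : ι → ℝ≥0∞ := fun k => ∑ i : Fin N, ‖χ k (t i.succ) - χ k (t i.castSucc)‖ₑ
  set A : ι → Fin m → ℝ≥0∞ := fun k j => ‖g k (x j.succ) - g k (x j.castSucc)‖ₑ
  have hrow : ∀ j : Fin m, ∑ i : Fin N,
      ENNReal.ofReal |rectInc (fun t x => ∑ k ∈ s, χ k t * g k x)
        (t i.succ) (t i.castSucc) (x j.succ) (x j.castSucc)| ≤ ∑ k ∈ s, B k * A k j := by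
    intro j
    simp only [rectInc_sum_mul, ← Real.enorm_eq_ofReal_abs, B, A, sum_mul]
    rw [sum_comm]
    gcongr with i
    exact (enorm_sum_le _ _).trans_eq (sum_congr rfl fun k _ => enorm_mul _ _)
  have hB : ∀ k, B k ≤ pVar 1 t₀ t₁ (χ k) := fun k => by
    simpa only [B, ENNReal.rpow_one, Real.enorm_eq_ofReal_abs] using sum_le_pVar ht 1 (χ k)
  have hA : ∀ k, ∑ j : Fin m, A k j ^ q ≤ pVar q x₀ x₁ (g k) := fun k => by
    simpa only [A, Real.enorm_eq_ofReal_abs] using sum_le_pVar hx q (g k)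
  calc _ ≤ (∑ j : Fin m, (∑ k ∈ s, B k * A k j) ^ q) ^ (1 / q) := by
        gcongr with j
        exact (ENNReal.sum_rpow_rpow_div_le _ _ hp hq0.le).trans (by gcongr; exact hrow j)
    _ ≤ ∑ k ∈ s, (∑ j : Fin m, (B k * A k j) ^ q) ^ (1 / q) := ENNReal.Lp_sum_le _ _ _ hq
    _ = ∑ k ∈ s, B k * (∑ j : Fin m, A k j ^ q) ^ (1 / q) := by
        simp only [ENNReal.Lp_const_mul _ _ _ hq0]
    _ ≤ _ := by gcongr with k; exacts [hB k, hA k]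

theorem stmt16_general (n : ℕ) (T M : ℝ) (hM : 0 < M)
    (q : ℝ) (hq : 1 ≤ q)
    (d : Fin n → (Fin n → ℝ) → ℝ)
    (tp : ℕ → ℝ)
    (c : ℝ → ℝ)
    (hvar : ∀ (k : ℕ) (i : Fin n), k ≤ i.val → ∀ R > (0:ℝ), ∃ K : ℝ, ∀ v : Fin n → ℝ,
      (∀ j, |v j| ≤ R) →
      pVar q (-R) R (fun x => d i fun j => if j.val < k then v j else x) ≤
        ENNReal.ofReal K) :
    ∀ p : ℝ, 1 ≤ p →
      LV p q 0 T (-M) M (fun t x => ∑ k ∈ Finset.range n,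
        if tp k ≤ t ∧ t < tp (k + 1) then
          (∑ i : Fin n, if k ≤ i.val then
            d i (fun j => if j.val < k then Function.leftLim c (tp (j.val + 1)) else x)
          else 0)
        else 0) ≠ ⊤ := by
  intro p hp
  set v : Fin n → ℝ := fun j => Function.leftLim c (tp (j.val + 1))
  set g : ℕ → ℝ → ℝ := fun k x =>
    ∑ i ∈ univ.filter (fun i : Fin n => k ≤ i.val), d i fun j => if j.val < k then v j else x
  have hG : (fun t x => ∑ k ∈ Finset.range n,
      if tp k ≤ t ∧ t < tp (k + 1) then
        (∑ i : Fin n, if k ≤ i.val then d i (fun j => if j.val < k then v j else x) else 0)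
      else 0) = fun t x => ∑ k ∈ range n, (Ico (tp k) (tp (k + 1))).indicator 1 t * g k x := by
    funext t x
    simp only [g, sum_filter, indicator_apply, Set.mem_Ico, Pi.one_apply, ite_mul, one_mul,
      zero_mul]
  -- `hvar` is applied on `[-R, R]`, which must contain `[-M, M]` and every frozen coordinate `v j`
  set R := M + ∑ j, |v j|
  have hMR : M ≤ R := le_add_of_nonneg_right (sum_nonneg fun _ _ => abs_nonneg _)
  have hvR : ∀ j, |v j| ≤ R := fun j =>
    (single_le_sum (fun j _ => abs_nonneg (v j)) (mem_univ j)).trans (le_add_of_nonneg_left hM.le)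
  have hg : ∀ k, pVar q (-M) M (g k) ^ (1 / q) ≠ ⊤ := by
    intro k
    refine ne_top_of_le_ne_top ?_ ((ENNReal.rpow_le_rpow (pVar_mono (neg_le_neg hMR) hMR _)
      (by positivity)).trans (pVar_sum_rpow_le _ _ hq _ _))
    refine ENNReal.sum_ne_top.2 fun i hi => ENNReal.rpow_ne_top_of_nonneg (by positivity) ?_
    obtain ⟨K, hK⟩ := hvar k i (mem_filter.1 hi).2 R (hM.trans_le hMR)
    exact ne_top_of_le_ne_top ENNReal.ofReal_ne_top (hK v hvR)
  rw [hG]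
  refine ne_top_of_le_ne_top ?_ (LV_sum_mul_le _ _ _ hp hq _ _ _ _)
  exact ENNReal.sum_ne_top.2 fun k _ => ENNReal.mul_ne_top
    (ne_top_of_le_ne_top ENNReal.ofNat_ne_top (pVar_one_indicator_Ico_le _ _ _ _)) (hg k)

/-- For a continuous `f : ℝⁿ → ℝ` with weak partial derivatives `d i` (in the sense of
integration by parts in each variable) such that each composed map
`x ↦ d i (c(t₁-), …, c(t_k-), x, …, x)` (for `i ≥ k`) has finite `q`-variation on compacts
uniformly over path values in compacts, the piecewise-in-time function
`G(t,x) = ∑_k 1_{[t_k,t_{k+1})}(t) ∑_{i ≥ k} d i (c(t₁-), …, c(t_k-), x, …, x)`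
has finite joint left `(p,q)`-variation for every `p ≥ 1`. -/
theorem stmt16 (n : ℕ) (hn : 0 < n) (T M : ℝ) (hT : 0 < T) (hM : 0 < M)
    (q : ℝ) (hq : 1 ≤ q)
    (f : (Fin n → ℝ) → ℝ) (hf : Continuous f)
    (d : Fin n → (Fin n → ℝ) → ℝ)
    (hweak : ∀ (i : Fin n) (y : Fin n → ℝ) (φ : ℝ → ℝ), ContDiff ℝ 1 φ →
      HasCompactSupport φ →
      ∫ s, f (Function.update y i s) * deriv φ s = -∫ s, d i (Function.update y i s) * φ s)
    (tp : ℕ → ℝ) (htp : StrictMonoOn tp (Set.Iic n)) (htp0 : tp 0 = 0) (htpn : tp n = T)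
    (c : ℝ → ℝ)
    (hvar : ∀ (k : ℕ) (i : Fin n), k ≤ i.val → ∀ R > (0:ℝ), ∃ K : ℝ, ∀ v : Fin n → ℝ,
      (∀ j, |v j| ≤ R) →
      pVar q (-R) R (fun x => d i fun j => if j.val < k then v j else x) ≤
        ENNReal.ofReal K) :
    ∀ p : ℝ, 1 ≤ p →
      LV p q 0 T (-M) M (fun t x => ∑ k ∈ Finset.range n,
        if tp k ≤ t ∧ t < tp (k + 1) then
          (∑ i : Fin n, if k ≤ i.val then
            d i (fun j => if j.val < k then Function.leftLim c (tp (j.val + 1)) else x)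
          else 0)
        else 0) ≠ ⊤ :=
  stmt16_general n T M hM q hq d tp c hvar
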